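/- arXiv:2311.12703 — 7 statements merged into one kernel-verified Lean document; each statement's English description precedes it below -/
import Mathlib

section
/- Let D ⊆ W be a subspace with T(D) ⊆ D, and suppose there is θ ∈ [0, π/2] such that ‖Tx‖ = cos θ · ‖x‖ for every x ∈ D (a pointwise slant subspace with slant angle θ). Then T(Tx) = -cos²θ · x for every x ∈ D. -/
/-!
`T` is skew-adjoint on `W`, since `J` is and the normal part `N a ∈ Wᗮ` is invisible against
vectors of `W`. Polarizing the slant condition gives `⟪T a, T b⟫ = cos²θ ⟪a, b⟫` on `D`, so
`T (T x) + cos²θ x` is a vector of `D` orthogonal to all of `D`, hence zero.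
-/

open scoped RealInnerProductSpace

section

variable {V F : Type*} [NormedAddCommGroup V] [InnerProductSpace ℝ V]
  [NormedAddCommGroup F] [InnerProductSpace ℝ F]

theorem inner_map_left_eq_neg_inner_map_right (J : V →ₗ[ℝ] V)
    (hJinner : ∀ x y : V, ⟪J x, J y⟫ = ⟪x, y⟫) (hJsq : ∀ x : V, J (J x) = -x) (a b : V) :
    ⟪J a, b⟫ = -⟪a, J b⟫ := by
  rw [← hJinner a (J b), hJsq, inner_neg_right, neg_neg]

theorem inner_map_map_eq_sq_mul_inner_of_norm_map_eq_mul (f : V →ₗ[ℝ] F) (D : Submodule ℝ V)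
    (c : ℝ) (hf : ∀ x ∈ D, ‖f x‖ = c * ‖x‖) {a b : V} (ha : a ∈ D) (hb : b ∈ D) :
    ⟪f a, f b⟫ = c ^ 2 * ⟪a, b⟫ := by
  simp only [real_inner_eq_norm_add_mul_self_sub_norm_mul_self_sub_norm_mul_self_div_two]
  rw [← map_add, hf _ (add_mem ha hb), hf a ha, hf b hb]
  ring

theorem inner_tangential_left_eq_neg (J T N : V →ₗ[ℝ] V)
    (hJinner : ∀ x y : V, ⟪J x, J y⟫ = ⟪x, y⟫) (hJsq : ∀ x : V, J (J x) = -x)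
    (W : Submodule ℝ V) (hN : ∀ x ∈ W, N x ∈ Wᗮ) (hTN : ∀ x ∈ W, J x = T x + N x)
    {a b : V} (ha : a ∈ W) (hb : b ∈ W) :
    ⟪T a, b⟫ = -⟪a, T b⟫ := by
  have hJT : ∀ {u v : V}, u ∈ W → v ∈ W → ⟪J u, v⟫ = ⟪T u, v⟫ := fun hu hv => by
    rw [hTN _ hu, inner_add_left, Submodule.inner_left_of_mem_orthogonal hv (hN _ hu), add_zero]
  calc ⟪T a, b⟫ = ⟪J a, b⟫ := (hJT ha hb).symm
    _ = -⟪J b, a⟫ := by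
      rw [inner_map_left_eq_neg_inner_map_right J hJinner hJsq, real_inner_comm]
    _ = -⟪a, T b⟫ := by rw [hJT hb ha, real_inner_comm]

theorem apply_apply_eq_neg_smul_of_skew_of_inner_map_map {T : V →ₗ[ℝ] V} {D : Submodule ℝ V}
    (hTD : ∀ x ∈ D, T x ∈ D) {k : ℝ}
    (hskew : ∀ a ∈ D, ∀ b ∈ D, ⟪T a, b⟫ = -⟪a, T b⟫)
    (hconf : ∀ a ∈ D, ∀ b ∈ D, ⟪T a, T b⟫ = k * ⟪a, b⟫) {x : V} (hx : x ∈ D) :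
    T (T x) = -(k • x) := by
  set z := T (T x) + k • x
  have hzD : z ∈ D := add_mem (hTD _ (hTD x hx)) (D.smul_mem k hx)
  have hz_perp : ∀ y ∈ D, ⟪z, y⟫ = 0 := fun y hy => by
    rw [inner_add_left, hskew _ (hTD x hx) y hy, hconf x hx y hy, real_inner_smul_left]
    ring
  exact eq_neg_of_add_eq_zero_left (inner_self_eq_zero.mp (hz_perp z hzD))

end

theorem slant_subspace_T_sq_general
    {V : Type*} [NormedAddCommGroup V] [InnerProductSpace ℝ V]
    (J : V →ₗ[ℝ] V)
    (hJinner : ∀ x y : V, ⟪J x, J y⟫ = ⟪x, y⟫)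
    (hJsq : ∀ x : V, J (J x) = -x)
    (W : Submodule ℝ V)
    (T N : V →ₗ[ℝ] V)
    (hN : ∀ x ∈ W, N x ∈ Wᗮ)
    (hTN : ∀ x ∈ W, J x = T x + N x)
    (D : Submodule ℝ V)
    (hDW : D ≤ W)
    (hTD : ∀ x ∈ D, T x ∈ D)
    (θ : ℝ)
    (hslant : ∀ x ∈ D, ‖T x‖ = Real.cos θ * ‖x‖) :
    ∀ x ∈ D, T (T x) = -((Real.cos θ) ^ 2 • x) := fun _ hx =>
  apply_apply_eq_neg_smul_of_skew_of_inner_map_map hTD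
    (fun _ ha _ hb => inner_tangential_left_eq_neg J T N hJinner hJsq W hN hTN (hDW ha) (hDW hb))
    (fun _ ha _ hb => inner_map_map_eq_sq_mul_inner_of_norm_map_eq_mul T D _ hslant ha hb) hx

/-- Fiberwise: on a pointwise slant subspace `D ⊆ W` with slant angle `θ`,
one has `T² = -cos²θ · id`. -/
theorem slant_subspace_T_sq
    {V : Type*} [NormedAddCommGroup V] [InnerProductSpace ℝ V] [FiniteDimensional ℝ V]
    (J : V →ₗ[ℝ] V)
    (hJinner : ∀ x y : V, ⟪J x, J y⟫ = ⟪x, y⟫)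
    (hJsq : ∀ x : V, J (J x) = -x)
    (W : Submodule ℝ V)
    (T N : V →ₗ[ℝ] V)
    (hT : ∀ x ∈ W, T x ∈ W)
    (hN : ∀ x ∈ W, N x ∈ Wᗮ)
    (hTN : ∀ x ∈ W, J x = T x + N x)
    (D : Submodule ℝ V)
    (hDW : D ≤ W)
    (hTD : ∀ x ∈ D, T x ∈ D)
    (θ : ℝ)
    (hθ : θ ∈ Set.Icc 0 (Real.pi / 2))
    (hslant : ∀ x ∈ D, ‖T x‖ = Real.cos θ * ‖x‖) :
    ∀ x ∈ D, T (T x) = -((Real.cos θ) ^ 2 • x) :=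
  slant_subspace_T_sq_general J hJinner hJsq W T N hN hTN D hDW hTD θ hslant
end

section
/- ⟪Tx, Ty⟫ = ∑_{i=0}^{k} cos²θᵢ · ⟪Pᵢx, Pᵢy⟫ for all x, y ∈ W (Lemma le6 (iii), first identity, in fiberwise form). -/
open scoped InnerProductSpace RealInnerProductSpace

/-!
On each `Dᵢ` the map `T` preserves `Dᵢ` and scales norms by `cos θᵢ`: for `i ≠ 0` this is the
slant hypothesis, and on the invariant part `D₀` the normal component `Nx` lies in `W ∩ W⊥ = 0`,
so `T = J` is an isometry there. By polarization `T` scales inner products on `Dᵢ` by `cos² θᵢ`.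
Writing `x = ∑ Pᵢx`, `y = ∑ Pᵢy`, the images `T Pᵢx` again lie in the mutually orthogonal `Dᵢ`,
so the cross terms of `⟪Tx, Ty⟫` vanish.
-/

section

variable {𝕜 E : Type*} [RCLike 𝕜] [NormedAddCommGroup E] [InnerProductSpace 𝕜 E]

theorem Submodule.eq_of_eq_add_mem_orthogonal {K : Submodule 𝕜 E} {x a b : E}
    (hx : x ∈ K) (ha : a ∈ K) (hb : b ∈ Kᗮ) (h : x = a + b) : x = a := by
  have hbK : b ∈ K := by
    rw [show b = x - a by rw [h]; abel]
    exact K.sub_mem hx ha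
  have hb0 : b = 0 := by
    simpa using (K.inf_orthogonal_eq_bot).le ⟨hbK, hb⟩
  rw [h, hb0, add_zero]

theorem inner_sum_sum_of_mem_orthogonal {ι : Type*} [Fintype ι] {D : ι → Submodule 𝕜 E}
    (hD : ∀ i j, i ≠ j → ∀ x ∈ D i, ∀ y ∈ D j, ⟪x, y⟫_𝕜 = 0)
    {a b : ι → E} (ha : ∀ i, a i ∈ D i) (hb : ∀ i, b i ∈ D i) :
    ⟪∑ i, a i, ∑ j, b j⟫_𝕜 = ∑ i, ⟪a i, b i⟫_𝕜 := by
  rw [sum_inner]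
  refine Finset.sum_congr rfl fun i _ => ?_
  rw [inner_sum]
  exact Finset.sum_eq_single i (fun j _ hji => hD i j (Ne.symm hji) _ (ha i) _ (hb j)) (by simp)

end

theorem inner_map_map_of_norm_map_eq_mul_norm {E F : Type*} [NormedAddCommGroup E]
    [InnerProductSpace ℝ E] [NormedAddCommGroup F] [InnerProductSpace ℝ F]
    (f : E →ₗ[ℝ] F) {K : Submodule ℝ E} {c : ℝ} (hf : ∀ x ∈ K, ‖f x‖ = c * ‖x‖)
    {u v : E} (hu : u ∈ K) (hv : v ∈ K) :
    ⟪f u, f v⟫ = c ^ 2 * ⟪u, v⟫ := by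
  rw [real_inner_eq_norm_add_mul_self_sub_norm_mul_self_sub_norm_mul_self_div_two (f u),
    real_inner_eq_norm_add_mul_self_sub_norm_mul_self_sub_norm_mul_self_div_two u,
    ← map_add, hf _ (K.add_mem hu hv), hf u hu, hf v hv]
  ring

theorem inner_T_T_eq_sum_cos_sq_general
    {V : Type*} [NormedAddCommGroup V] [InnerProductSpace ℝ V]
    (J : V →ₗ[ℝ] V)
    (hJinner : ∀ x y : V, ⟪J x, J y⟫ = ⟪x, y⟫)
    (W : Submodule ℝ V)
    (T N : V →ₗ[ℝ] V)
    (hT : ∀ x ∈ W, T x ∈ W)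
    (hN : ∀ x ∈ W, N x ∈ Wᗮ)
    (hTN : ∀ x ∈ W, J x = T x + N x)
    (k : ℕ)
    (D : Fin (k+1) → Submodule ℝ V)
    (hDW : ∀ i, D i ≤ W)
    (hDorth : ∀ i j, i ≠ j → ∀ x ∈ D i, ∀ y ∈ D j, ⟪x, y⟫ = 0)
    (hinv : ∀ x ∈ D 0, J x ∈ D 0)
    (hTD : ∀ i : Fin (k+1), i ≠ 0 → ∀ x ∈ D i, T x ∈ D i)
    (θ : Fin (k+1) → ℝ)
    (hθ0 : θ 0 = 0)
    (hslant : ∀ i : Fin (k+1), i ≠ 0 → ∀ x ∈ D i, ‖T x‖ = Real.cos (θ i) * ‖x‖)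
    (P : Fin (k+1) → V →ₗ[ℝ] V)
    (hPmem : ∀ i x, P i x ∈ D i)
    (hPsum : ∀ x ∈ W, x = ∑ i, P i x) :
    ∀ x ∈ W, ∀ y ∈ W, ⟪T x, T y⟫ = ∑ i, (Real.cos (θ i)) ^ 2 * ⟪P i x, P i y⟫ := by
  have hJT : ∀ u ∈ D 0, T u = J u := fun u hu =>
    (W.eq_of_eq_add_mem_orthogonal (hDW 0 (hinv u hu)) (hT u (hDW 0 hu)) (hN u (hDW 0 hu))
      (hTN u (hDW 0 hu))).symm
  have hTmem : ∀ i, ∀ u ∈ D i, T u ∈ D i := by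
    intro i u hu
    rcases eq_or_ne i 0 with rfl | hi
    · exact hJT u hu ▸ hinv u hu
    · exact hTD i hi u hu
  have hnorm : ∀ i, ∀ u ∈ D i, ‖T u‖ = Real.cos (θ i) * ‖u‖ := by
    intro i u hu
    rcases eq_or_ne i 0 with rfl | hi
    · rw [hJT u hu, hθ0, Real.cos_zero, one_mul]
      exact (J.isometryOfInner hJinner).norm_map u
    · exact hslant i hi u hu
  intro x hx y hy
  calc ⟪T x, T y⟫ = ⟪∑ i, T (P i x), ∑ j, T (P j y)⟫ := by
        rw [← map_sum, ← map_sum, ← hPsum x hx, ← hPsum y hy]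
    _ = ∑ i, ⟪T (P i x), T (P i y)⟫ :=
        inner_sum_sum_of_mem_orthogonal hDorth (fun i => hTmem i _ (hPmem i x))
          (fun i => hTmem i _ (hPmem i y))
    _ = ∑ i, (Real.cos (θ i)) ^ 2 * ⟪P i x, P i y⟫ :=
        Finset.sum_congr rfl fun i _ =>
          inner_map_map_of_norm_map_eq_mul_norm T (hnorm i) (hPmem i x) (hPmem i y)

/-- Lemma le6 (iii), first identity, fiberwise:
`⟪Tx, Ty⟫ = ∑ᵢ cos²θᵢ · ⟪Pᵢx, Pᵢy⟫` on `W`. -/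
theorem inner_T_T_eq_sum_cos_sq
    {V : Type*} [NormedAddCommGroup V] [InnerProductSpace ℝ V] [FiniteDimensional ℝ V]
    (J : V →ₗ[ℝ] V)
    (hJinner : ∀ x y : V, ⟪J x, J y⟫ = ⟪x, y⟫)
    (hJsq : ∀ x : V, J (J x) = -x)
    (W : Submodule ℝ V)
    (T N : V →ₗ[ℝ] V)
    (hT : ∀ x ∈ W, T x ∈ W)
    (hN : ∀ x ∈ W, N x ∈ Wᗮ)
    (hTN : ∀ x ∈ W, J x = T x + N x)
    (k : ℕ)
    (D : Fin (k+1) → Submodule ℝ V)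
    (hDW : ∀ i, D i ≤ W)
    (hDorth : ∀ i j, i ≠ j → ∀ x ∈ D i, ∀ y ∈ D j, ⟪x, y⟫ = 0)
    (hinv : ∀ x ∈ D 0, J x ∈ D 0)
    (hTD : ∀ i : Fin (k+1), i ≠ 0 → ∀ x ∈ D i, T x ∈ D i)
    (θ : Fin (k+1) → ℝ)
    (hθ0 : θ 0 = 0)
    (hθ : ∀ i : Fin (k+1), i ≠ 0 → θ i ∈ Set.Ioc 0 (Real.pi / 2))
    (hslant : ∀ i : Fin (k+1), i ≠ 0 → ∀ x ∈ D i, ‖T x‖ = Real.cos (θ i) * ‖x‖)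
    (P : Fin (k+1) → V →ₗ[ℝ] V)
    (hPmem : ∀ i x, P i x ∈ D i)
    (hPorth : ∀ i x, ∀ y ∈ D i, ⟪x - P i x, y⟫ = 0)
    (hPsum : ∀ x ∈ W, x = ∑ i, P i x) :
    ∀ x ∈ W, ∀ y ∈ W, ⟪T x, T y⟫ = ∑ i, (Real.cos (θ i)) ^ 2 * ⟪P i x, P i y⟫ :=
  inner_T_T_eq_sum_cos_sq_general J hJinner W T N hT hN hTN k D hDW hDorth hinv hTD θ hθ0 hslant P
    hPmem hPsum
end

section
/- ⟪Nx, Ny⟫ = ∑_{i=1}^{k} sin²θᵢ · ⟪Pᵢx, Pᵢy⟫ for all x, y ∈ W (Lemma le6 (iii), second identity, in fiberwise form). -/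
/-!
Since `J` is an isometry and `T`, `N` take values in the complementary spaces `W`, `Wᗮ`,
`⟪x, y⟫ = ⟪T x, T y⟫ + ⟪N x, N y⟫` on `W`. On `D i` the slant condition gives, by polarization,
`⟪T u, T v⟫ = cos² θᵢ ⟪u, v⟫`, also for `i = 0` where `T = J`; since `T` preserves the orthogonal
decomposition, `⟪N x, N y⟫ = ∑ᵢ (1 - cos² θᵢ) ⟪Pᵢ x, Pᵢ y⟫`, and the `i = 0` term vanishes.
-/

open scoped RealInnerProductSpace

section

variable {V : Type*} [NormedAddCommGroup V] [InnerProductSpace ℝ V]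

theorem inner_sum_eq_sum_inner_of_mem_orthogonal {ι : Type*} [Fintype ι]
    {D : ι → Submodule ℝ V} (hD : ∀ i j, i ≠ j → ∀ x ∈ D i, ∀ y ∈ D j, ⟪x, y⟫ = 0)
    {a b : ι → V} (ha : ∀ i, a i ∈ D i) (hb : ∀ i, b i ∈ D i) :
    ⟪∑ i, a i, ∑ i, b i⟫ = ∑ i, ⟪a i, b i⟫ :=
  have hfam : OrthogonalFamily ℝ (fun i => D i) fun i => (D i).subtypeₗᵢ :=
    orthogonalFamily_iff_pairwise.2 fun i j hij => Submodule.isOrtho_iff_inner_eq.2 (hD i j hij)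
  hfam.inner_sum (fun i => ⟨a i, ha i⟩) (fun i => ⟨b i, hb i⟩) Finset.univ

theorem inner_map_map_eq_sq_mul_inner_of_norm_map {F : Type*} [NormedAddCommGroup F]
    [InnerProductSpace ℝ F] (f : V →ₗ[ℝ] F) (D : Submodule ℝ V) (c : ℝ)
    (hf : ∀ x ∈ D, ‖f x‖ = c * ‖x‖) {u v : V} (hu : u ∈ D) (hv : v ∈ D) :
    ⟪f u, f v⟫ = c ^ 2 * ⟪u, v⟫ := by
  rw [real_inner_eq_norm_add_mul_self_sub_norm_mul_self_sub_norm_mul_self_div_two,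
    real_inner_eq_norm_add_mul_self_sub_norm_mul_self_sub_norm_mul_self_div_two, ← map_add,
    hf _ (D.add_mem hu hv), hf u hu, hf v hv]
  ring

variable {J T N : V →ₗ[ℝ] V} {W : Submodule ℝ V}

theorem inner_eq_inner_add_inner_of_isometry (hJ : ∀ x y : V, ⟪J x, J y⟫ = ⟪x, y⟫)
    (hT : ∀ x ∈ W, T x ∈ W) (hN : ∀ x ∈ W, N x ∈ Wᗮ) (hTN : ∀ x ∈ W, J x = T x + N x)
    {x y : V} (hx : x ∈ W) (hy : y ∈ W) :
    ⟪x, y⟫ = ⟪T x, T y⟫ + ⟪N x, N y⟫ := by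
  have hTxNy : ⟪T x, N y⟫ = 0 := Submodule.inner_right_of_mem_orthogonal (hT x hx) (hN y hy)
  have hNxTy : ⟪N x, T y⟫ = 0 := Submodule.inner_left_of_mem_orthogonal (hT y hy) (hN x hx)
  rw [← hJ, hTN x hx, hTN y hy, inner_add_left, inner_add_right, inner_add_right, hTxNy, hNxTy]
  ring

theorem tangential_eq_of_map_mem (hT : ∀ x ∈ W, T x ∈ W) (hN : ∀ x ∈ W, N x ∈ Wᗮ)
    (hTN : ∀ x ∈ W, J x = T x + N x) {x : V} (hx : x ∈ W) (hJx : J x ∈ W) :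
    T x = J x := by
  have hNx : N x ∈ W := by
    rw [eq_sub_of_add_eq' (hTN x hx).symm]
    exact W.sub_mem hJx (hT x hx)
  rw [hTN x hx, Submodule.disjoint_def.1 W.orthogonal_disjoint _ hNx (hN x hx), add_zero]

end

theorem inner_N_N_eq_sum_sin_sq_general
    {V : Type*} [NormedAddCommGroup V] [InnerProductSpace ℝ V]
    (J : V →ₗ[ℝ] V)
    (hJinner : ∀ x y : V, ⟪J x, J y⟫ = ⟪x, y⟫)
    (W : Submodule ℝ V)
    (T N : V →ₗ[ℝ] V)
    (hT : ∀ x ∈ W, T x ∈ W)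
    (hN : ∀ x ∈ W, N x ∈ Wᗮ)
    (hTN : ∀ x ∈ W, J x = T x + N x)
    (k : ℕ)
    (D : Fin (k+1) → Submodule ℝ V)
    (hDW : ∀ i, D i ≤ W)
    (hDorth : ∀ i j, i ≠ j → ∀ x ∈ D i, ∀ y ∈ D j, ⟪x, y⟫ = 0)
    (hinv : ∀ x ∈ D 0, J x ∈ D 0)
    (hTD : ∀ i : Fin (k+1), i ≠ 0 → ∀ x ∈ D i, T x ∈ D i)
    (θ : Fin (k+1) → ℝ)
    (hθ0 : θ 0 = 0)
    (hslant : ∀ i : Fin (k+1), i ≠ 0 → ∀ x ∈ D i, ‖T x‖ = Real.cos (θ i) * ‖x‖)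
    (P : Fin (k+1) → V →ₗ[ℝ] V)
    (hPmem : ∀ i x, P i x ∈ D i)
    (hPsum : ∀ x ∈ W, x = ∑ i, P i x) :
    ∀ x ∈ W, ∀ y ∈ W,
      ⟪N x, N y⟫ = ∑ i ∈ Finset.univ.erase (0 : Fin (k+1)),
        (Real.sin (θ i)) ^ 2 * ⟪P i x, P i y⟫ := by
  have hT₀ : ∀ x ∈ D 0, T x = J x := fun x hx =>
    tangential_eq_of_map_mem hT hN hTN (hDW 0 hx) (hDW 0 (hinv x hx))
  have hTmem : ∀ i, ∀ x ∈ D i, T x ∈ D i := by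
    intro i x hx
    rcases eq_or_ne i 0 with rfl | hi
    · exact hT₀ x hx ▸ hinv x hx
    · exact hTD i hi x hx
  have hTT : ∀ i, ∀ u ∈ D i, ∀ v ∈ D i, ⟪T u, T v⟫ = Real.cos (θ i) ^ 2 * ⟪u, v⟫ := by
    intro i u hu v hv
    rcases eq_or_ne i 0 with rfl | hi
    · rw [hθ0, Real.cos_zero, one_pow, one_mul, hT₀ u hu, hT₀ v hv, hJinner]
    · exact inner_map_map_eq_sq_mul_inner_of_norm_map T (D i) _ (hslant i hi) hu hv
  intro x hx y hy
  have hTx : T x = ∑ i, T (P i x) := by rw [← map_sum, ← hPsum x hx]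
  have hTy : T y = ∑ i, T (P i y) := by rw [← map_sum, ← hPsum y hy]
  calc ⟪N x, N y⟫ = ⟪x, y⟫ - ⟪T x, T y⟫ := by
        rw [inner_eq_inner_add_inner_of_isometry hJinner hT hN hTN hx hy]; ring
    _ = ∑ i, ⟪P i x, P i y⟫ - ∑ i, ⟪T (P i x), T (P i y)⟫ := by
        congr 1
        · conv_lhs => rw [hPsum x hx, hPsum y hy]
          exact inner_sum_eq_sum_inner_of_mem_orthogonal hDorth (hPmem · x) (hPmem · y)
        · rw [hTx, hTy]
          exact inner_sum_eq_sum_inner_of_mem_orthogonal hDorth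
            (fun i => hTmem i _ (hPmem i x)) (fun i => hTmem i _ (hPmem i y))
    _ = ∑ i, Real.sin (θ i) ^ 2 * ⟪P i x, P i y⟫ := by
        rw [← Finset.sum_sub_distrib]
        refine Finset.sum_congr rfl fun i _ => ?_
        rw [hTT i _ (hPmem i x) _ (hPmem i y), Real.sin_sq]
        ring
    _ = _ := (Finset.sum_erase _ (by rw [hθ0, Real.sin_zero]; ring)).symm

/-- Lemma le6 (iii), second identity, fiberwise:
`⟪Nx, Ny⟫ = ∑_{i=1}^{k} sin²θᵢ · ⟪Pᵢx, Pᵢy⟫` on `W`. -/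
theorem inner_N_N_eq_sum_sin_sq
    {V : Type*} [NormedAddCommGroup V] [InnerProductSpace ℝ V] [FiniteDimensional ℝ V]
    (J : V →ₗ[ℝ] V)
    (hJinner : ∀ x y : V, ⟪J x, J y⟫ = ⟪x, y⟫)
    (hJsq : ∀ x : V, J (J x) = -x)
    (W : Submodule ℝ V)
    (T N : V →ₗ[ℝ] V)
    (hT : ∀ x ∈ W, T x ∈ W)
    (hN : ∀ x ∈ W, N x ∈ Wᗮ)
    (hTN : ∀ x ∈ W, J x = T x + N x)
    (k : ℕ)
    (D : Fin (k+1) → Submodule ℝ V)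
    (hDW : ∀ i, D i ≤ W)
    (hDorth : ∀ i j, i ≠ j → ∀ x ∈ D i, ∀ y ∈ D j, ⟪x, y⟫ = 0)
    (hinv : ∀ x ∈ D 0, J x ∈ D 0)
    (hTD : ∀ i : Fin (k+1), i ≠ 0 → ∀ x ∈ D i, T x ∈ D i)
    (θ : Fin (k+1) → ℝ)
    (hθ0 : θ 0 = 0)
    (hθ : ∀ i : Fin (k+1), i ≠ 0 → θ i ∈ Set.Ioc 0 (Real.pi / 2))
    (hslant : ∀ i : Fin (k+1), i ≠ 0 → ∀ x ∈ D i, ‖T x‖ = Real.cos (θ i) * ‖x‖)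
    (P : Fin (k+1) → V →ₗ[ℝ] V)
    (hPmem : ∀ i x, P i x ∈ D i)
    (hPorth : ∀ i x, ∀ y ∈ D i, ⟪x - P i x, y⟫ = 0)
    (hPsum : ∀ x ∈ W, x = ∑ i, P i x) :
    ∀ x ∈ W, ∀ y ∈ W,
      ⟪N x, N y⟫ = ∑ i ∈ Finset.univ.erase (0 : Fin (k+1)),
        (Real.sin (θ i)) ^ 2 * ⟪P i x, P i y⟫ :=
  inner_N_N_eq_sum_sin_sq_general J hJinner W T N hT hN hTN k D hDW hDorth hinv hTD θ hθ0 hslant P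
    hPmem hPsum
end

section
/- For x ∈ W, one has Nx = 0 if and only if x ∈ D₀. (This is the key step in the proof of Theorem 3.5 (i): since each θᵢ is nowhere zero, the vanishing of N(∑_{i=1}^{k} Pᵢx) forces Pᵢx = 0 for all i ∈ {1,…,k}.) -/
/-!
If `Nx = 0` then `Tx = Jx`, so `T` preserves `‖x‖`. Split `x = ∑ Pᵢx`: `T` maps each `Dᵢ` into
itself, is isometric on `D₀` and shrinks `Dᵢ` by `cos θᵢ < 1` for `i ≠ 0`. By Pythagoras on both
sides, `‖Tx‖² = ∑ ‖TPᵢx‖² ≤ ∑ ‖Pᵢx‖² = ‖x‖²` must be termwise equalities, so `Pᵢx = 0` for `i ≠ 0`.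
-/

open scoped RealInnerProductSpace

section

variable {𝕜 V : Type*} [RCLike 𝕜] [NormedAddCommGroup V] [InnerProductSpace 𝕜 V]

theorem Submodule.eq_zero_of_mem_orthogonal_of_eq_add {W : Submodule 𝕜 V} {a b c : V}
    (ha : a ∈ W) (hb : b ∈ W) (hc : c ∈ Wᗮ) (h : a = b + c) : c = 0 := by
  have hcW : c ∈ W := by simpa [h] using W.sub_mem ha hb
  exact Submodule.disjoint_def.1 W.orthogonal_disjoint c hcW hc

theorem OrthogonalFamily.norm_sum_sq_of_mem {ι : Type*} {D : ι → Submodule 𝕜 V}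
    (hD : OrthogonalFamily 𝕜 (fun i => D i) fun i => (D i).subtypeₗᵢ) {w : ι → V}
    (hw : ∀ i, w i ∈ D i) (s : Finset ι) :
    ‖∑ i ∈ s, w i‖ ^ 2 = ∑ i ∈ s, ‖w i‖ ^ 2 :=
  hD.norm_sum (fun i => ⟨w i, hw i⟩) s

theorem OrthogonalFamily.norm_map_eq_of_norm_map_sum_eq {ι : Type*} {D : ι → Submodule 𝕜 V}
    (hD : OrthogonalFamily 𝕜 (fun i => D i) fun i => (D i).subtypeₗᵢ) (S : V →ₗ[𝕜] V)
    {s : Finset ι} {w : ι → V} (hw : ∀ i, w i ∈ D i) (hSw : ∀ i, S (w i) ∈ D i)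
    (hle : ∀ i ∈ s, ‖S (w i)‖ ≤ ‖w i‖) (hsum : ‖S (∑ i ∈ s, w i)‖ = ‖∑ i ∈ s, w i‖) :
    ∀ i ∈ s, ‖S (w i)‖ = ‖w i‖ := by
  have hsq : ∑ i ∈ s, ‖S (w i)‖ ^ 2 = ∑ i ∈ s, ‖w i‖ ^ 2 := by
    rw [← hD.norm_sum_sq_of_mem hSw, ← hD.norm_sum_sq_of_mem hw, ← map_sum, hsum]
  intro i hi
  have hle_sq : ∀ i ∈ s, ‖S (w i)‖ ^ 2 ≤ ‖w i‖ ^ 2 := fun i hi =>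
    pow_le_pow_left₀ (norm_nonneg _) (hle i hi) 2
  exact (pow_left_inj₀ (norm_nonneg _) (norm_nonneg _) two_ne_zero).1
    ((Finset.sum_eq_sum_iff_of_le hle_sq).1 hsq i hi)

end

theorem Real.cos_ne_one_of_mem_Ioc {θ : ℝ} (hθ : θ ∈ Set.Ioc 0 (Real.pi / 2)) :
    Real.cos θ ≠ 1 := by
  simpa using (Real.cos_lt_cos_of_nonneg_of_le_pi_div_two le_rfl hθ.2 hθ.1).ne

theorem norm_le_of_norm_eq_cos_mul {E F : Type*} [SeminormedAddCommGroup E]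
    [SeminormedAddCommGroup F] {x : E} {y : F} {θ : ℝ} (h : ‖y‖ = Real.cos θ * ‖x‖) :
    ‖y‖ ≤ ‖x‖ := by
  rw [h]
  exact mul_le_of_le_one_left (norm_nonneg x) (Real.cos_le_one θ)

theorem eq_zero_of_norm_eq_cos_mul_of_norm_eq {E F : Type*} [NormedAddCommGroup E]
    [SeminormedAddCommGroup F] {x : E} {y : F} {θ : ℝ} (hθ : Real.cos θ ≠ 1)
    (h : ‖y‖ = Real.cos θ * ‖x‖) (hxy : ‖y‖ = ‖x‖) : x = 0 := by
  have : (1 - Real.cos θ) * ‖x‖ = 0 := by linarith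
  simpa [sub_ne_zero.2 hθ.symm] using this

theorem N_eq_zero_iff_mem_invariant_general
    {V : Type*} [NormedAddCommGroup V] [InnerProductSpace ℝ V]
    (J : V →ₗ[ℝ] V)
    (hJinner : ∀ x y : V, ⟪J x, J y⟫ = ⟪x, y⟫)
    (W : Submodule ℝ V)
    (T N : V →ₗ[ℝ] V)
    (hT : ∀ x ∈ W, T x ∈ W)
    (hN : ∀ x ∈ W, N x ∈ Wᗮ)
    (hTN : ∀ x ∈ W, J x = T x + N x)
    (k : ℕ)
    (D : Fin (k+1) → Submodule ℝ V)
    (hDW : ∀ i, D i ≤ W)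
    (hDorth : ∀ i j, i ≠ j → ∀ x ∈ D i, ∀ y ∈ D j, ⟪x, y⟫ = 0)
    (hinv : ∀ x ∈ D 0, J x ∈ D 0)
    (hTD : ∀ i : Fin (k+1), i ≠ 0 → ∀ x ∈ D i, T x ∈ D i)
    (θ : Fin (k+1) → ℝ)
    (hθ : ∀ i : Fin (k+1), i ≠ 0 → θ i ∈ Set.Ioc 0 (Real.pi / 2))
    (hslant : ∀ i : Fin (k+1), i ≠ 0 → ∀ x ∈ D i, ‖T x‖ = Real.cos (θ i) * ‖x‖)
    (P : Fin (k+1) → V →ₗ[ℝ] V)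
    (hPmem : ∀ i x, P i x ∈ D i)
    (hPsum : ∀ x ∈ W, x = ∑ i, P i x) :
    ∀ x ∈ W, (N x = 0 ↔ x ∈ D 0) := by
  have hJnorm : ∀ x, ‖J x‖ = ‖x‖ := (J.isometryOfInner hJinner).norm_map
  have hTJ : ∀ y ∈ W, N y = 0 → T y = J y := fun y hy hNy => by rw [hTN y hy, hNy, add_zero]
  have hN0 : ∀ y ∈ D 0, N y = 0 := fun y hy =>
    Submodule.eq_zero_of_mem_orthogonal_of_eq_add (hDW 0 (hinv y hy)) (hT y (hDW 0 hy))
      (hN y (hDW 0 hy)) (hTN y (hDW 0 hy))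
  have hTJ0 : ∀ y ∈ D 0, T y = J y := fun y hy => hTJ y (hDW 0 hy) (hN0 y hy)
  intro x hx
  refine ⟨fun hNx => ?_, hN0 x⟩
  have hTP : ∀ i, T (P i x) ∈ D i := fun i => by
    rcases eq_or_ne i 0 with rfl | hi
    · exact hTJ0 _ (hPmem 0 x) ▸ hinv _ (hPmem 0 x)
    · exact hTD i hi _ (hPmem i x)
  have hle : ∀ i ∈ Finset.univ, ‖T (P i x)‖ ≤ ‖P i x‖ := fun i _ => by
    rcases eq_or_ne i 0 with rfl | hi
    · rw [hTJ0 _ (hPmem 0 x), hJnorm]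
    · exact norm_le_of_norm_eq_cos_mul (hslant i hi _ (hPmem i x))
  have hD : OrthogonalFamily ℝ (fun i => D i) fun i => (D i).subtypeₗᵢ :=
    OrthogonalFamily.of_pairwise fun i j hij => Submodule.isOrtho_iff_inner_eq.2 (hDorth i j hij)
  have hnorm := hD.norm_map_eq_of_norm_map_sum_eq T (hPmem · x) hTP hle
    (by rw [← hPsum x hx, hTJ x hx hNx, hJnorm])
  have hP : ∀ i ≠ 0, P i x = 0 := fun i hi =>
    eq_zero_of_norm_eq_cos_mul_of_norm_eq (Real.cos_ne_one_of_mem_Ioc (hθ i hi))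
      (hslant i hi _ (hPmem i x)) (hnorm i (Finset.mem_univ i))
  rw [hPsum x hx, Finset.sum_eq_single 0 (fun i _ hi => hP i hi) (by simp)]
  exact hPmem 0 x

/-- Key step in Theorem 3.5 (i), fiberwise: for `x ∈ W`, `Nx = 0` iff `x ∈ D₀`. -/
theorem N_eq_zero_iff_mem_invariant
    {V : Type*} [NormedAddCommGroup V] [InnerProductSpace ℝ V] [FiniteDimensional ℝ V]
    (J : V →ₗ[ℝ] V)
    (hJinner : ∀ x y : V, ⟪J x, J y⟫ = ⟪x, y⟫)
    (hJsq : ∀ x : V, J (J x) = -x)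
    (W : Submodule ℝ V)
    (T N : V →ₗ[ℝ] V)
    (hT : ∀ x ∈ W, T x ∈ W)
    (hN : ∀ x ∈ W, N x ∈ Wᗮ)
    (hTN : ∀ x ∈ W, J x = T x + N x)
    (k : ℕ)
    (D : Fin (k+1) → Submodule ℝ V)
    (hDW : ∀ i, D i ≤ W)
    (hDorth : ∀ i j, i ≠ j → ∀ x ∈ D i, ∀ y ∈ D j, ⟪x, y⟫ = 0)
    (hinv : ∀ x ∈ D 0, J x ∈ D 0)
    (hTD : ∀ i : Fin (k+1), i ≠ 0 → ∀ x ∈ D i, T x ∈ D i)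
    (θ : Fin (k+1) → ℝ)
    (hθ0 : θ 0 = 0)
    (hθ : ∀ i : Fin (k+1), i ≠ 0 → θ i ∈ Set.Ioc 0 (Real.pi / 2))
    (hslant : ∀ i : Fin (k+1), i ≠ 0 → ∀ x ∈ D i, ‖T x‖ = Real.cos (θ i) * ‖x‖)
    (P : Fin (k+1) → V →ₗ[ℝ] V)
    (hPmem : ∀ i x, P i x ∈ D i)
    (hPorth : ∀ i x, ∀ y ∈ D i, ⟪x - P i x, y⟫ = 0)
    (hPsum : ∀ x ∈ W, x = ∑ i, P i x) :
    ∀ x ∈ W, (N x = 0 ↔ x ∈ D 0) :=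
  N_eq_zero_iff_mem_invariant_general J hJinner W T N hT hN hTN k D hDW hDorth hinv hTD θ hθ hslant
    P hPmem hPsum
end

section
/- If A_{nv} x = -A_v(Tx) for all x ∈ W and v ∈ W⊥, then h(Tx, y) = h(x, Ty) for all x, y ∈ W (Proposition 3.4 (ii), implication (3) ⇒ (1), in fiberwise form). -/
/-!
Pairing with a normal vector `v`, the hypothesis turns `⟪h(Tx, y), v⟫ = ⟪A_v(Tx), y⟫` into
`-⟪A_{nv} x, y⟫ = -⟪h(x, y), nv⟫`, which is symmetric in `x` and `y`. Hence `h(Tx, y)` and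
`h(x, Ty) = h(Ty, x)` have the same inner product with every normal vector, and both are normal.
-/

open scoped RealInnerProductSpace

theorem Submodule.eq_of_mem_of_forall_inner_eq {𝕜 E : Type*} [RCLike 𝕜] [NormedAddCommGroup E]
    [InnerProductSpace 𝕜 E] {K : Submodule 𝕜 E} {a b : E} (ha : a ∈ K) (hb : b ∈ K)
    (h : ∀ v ∈ K, inner 𝕜 a v = inner 𝕜 b v) : a = b := by
  rw [← sub_eq_zero, ← inner_self_eq_zero (𝕜 := 𝕜), inner_sub_left, h _ (K.sub_mem ha hb),
    sub_self]

theorem inner_h_T_left_eq_neg_inner_h_n {V : Type*} [NormedAddCommGroup V]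
    [InnerProductSpace ℝ V] {W : Submodule ℝ V} {T n : V →ₗ[ℝ] V} {h : V →ₗ[ℝ] V →ₗ[ℝ] V}
    {A : V → V →ₗ[ℝ] V} (hT : ∀ x ∈ W, T x ∈ W) (hn : ∀ v ∈ Wᗮ, n v ∈ Wᗮ)
    (hA : ∀ v ∈ Wᗮ, ∀ x ∈ W, ∀ y ∈ W, ⟪A v x, y⟫ = ⟪h x y, v⟫)
    (h3 : ∀ v ∈ Wᗮ, ∀ x ∈ W, A (n v) x = -(A v (T x)))
    {x y v : V} (hx : x ∈ W) (hy : y ∈ W) (hv : v ∈ Wᗮ) :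
    ⟪h (T x) y, v⟫ = -⟪h x y, n v⟫ := by
  rw [← hA v hv (T x) (hT x hx) y hy, neg_eq_iff_eq_neg.mp (h3 v hv x hx).symm, inner_neg_left,
    hA (n v) (hn v hv) x hx y hy]

theorem h_T_symm_of_shape_n_anticommutes_general
    {V : Type*} [NormedAddCommGroup V] [InnerProductSpace ℝ V]
    (W : Submodule ℝ V)
    (T : V →ₗ[ℝ] V)
    (hT : ∀ x ∈ W, T x ∈ W)
    (n : V →ₗ[ℝ] V)
    (hn : ∀ v ∈ Wᗮ, n v ∈ Wᗮ)
    (h : V →ₗ[ℝ] V →ₗ[ℝ] V)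
    (hhmem : ∀ x ∈ W, ∀ y ∈ W, h x y ∈ Wᗮ)
    (hhsymm : ∀ x ∈ W, ∀ y ∈ W, h x y = h y x)
    (A : V → V →ₗ[ℝ] V)
    (hA : ∀ v ∈ Wᗮ, ∀ x ∈ W, ∀ y ∈ W, ⟪A v x, y⟫ = ⟪h x y, v⟫)
    (h3 : ∀ v ∈ Wᗮ, ∀ x ∈ W, A (n v) x = -(A v (T x))) :
    ∀ x ∈ W, ∀ y ∈ W, h (T x) y = h x (T y) := by
  intro x hx y hy
  refine Wᗮ.eq_of_mem_of_forall_inner_eq (hhmem _ (hT x hx) _ hy) (hhmem _ hx _ (hT y hy))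
    fun v hv => ?_
  rw [hhsymm x hx _ (hT y hy), inner_h_T_left_eq_neg_inner_h_n hT hn hA h3 hx hy hv,
    inner_h_T_left_eq_neg_inner_h_n hT hn hA h3 hy hx hv, hhsymm x hx y hy]

/-- Proposition 3.4 (ii), implication (3) ⇒ (1), fiberwise:
if `A_{nv} x = -A_v(Tx)` for all `x ∈ W`, `v ∈ W⊥`, then
`h(Tx, y) = h(x, Ty)` for all `x, y ∈ W`. -/
theorem h_T_symm_of_shape_n_anticommutes
    {V : Type*} [NormedAddCommGroup V] [InnerProductSpace ℝ V] [FiniteDimensional ℝ V]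
    (J : V →ₗ[ℝ] V)
    (hJinner : ∀ x y : V, ⟪J x, J y⟫ = ⟪x, y⟫)
    (hJsq : ∀ x : V, J (J x) = -x)
    (W : Submodule ℝ V)
    (T N : V →ₗ[ℝ] V)
    (hT : ∀ x ∈ W, T x ∈ W)
    (hN : ∀ x ∈ W, N x ∈ Wᗮ)
    (hTN : ∀ x ∈ W, J x = T x + N x)
    (t n : V →ₗ[ℝ] V)
    (ht : ∀ v ∈ Wᗮ, t v ∈ W)
    (hn : ∀ v ∈ Wᗮ, n v ∈ Wᗮ)
    (htn : ∀ v ∈ Wᗮ, J v = t v + n v)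
    (h : V →ₗ[ℝ] V →ₗ[ℝ] V)
    (hhmem : ∀ x ∈ W, ∀ y ∈ W, h x y ∈ Wᗮ)
    (hhsymm : ∀ x ∈ W, ∀ y ∈ W, h x y = h y x)
    (A : V → V →ₗ[ℝ] V)
    (hAmem : ∀ v ∈ Wᗮ, ∀ x ∈ W, A v x ∈ W)
    (hA : ∀ v ∈ Wᗮ, ∀ x ∈ W, ∀ y ∈ W, ⟪A v x, y⟫ = ⟪h x y, v⟫)
    (h3 : ∀ v ∈ Wᗮ, ∀ x ∈ W, A (n v) x = -(A v (T x))) :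
    ∀ x ∈ W, ∀ y ∈ W, h (T x) y = h x (T y) :=
  h_T_symm_of_shape_n_anticommutes_general W T hT n hn h hhmem hhsymm A hA h3
end

section
/- If h(x, Ty) = n h(x, y) for all x, y ∈ W (the fiberwise form of the condition ∇N = 0 for a submanifold of a Kähler manifold), then A_{nv} x = -A_v(Tx) for all x ∈ W and v ∈ W⊥ (Proposition 3.4 (ii), implication ∇N = 0 ⇒ (3), in fiberwise form). -/
/-!
`J` is skew-adjoint, so its normal part `n` is skew-adjoint on `Wᗮ`. This moves `n` from `v`
onto `h(x, y)` in `⟪A_{nv} x, y⟫ = ⟪h(x, y), nv⟫`, where the hypothesis and the symmetry of `h`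
turn it into `T` acting on `x`.
-/

open scoped RealInnerProductSpace

section

variable {V : Type*} [NormedAddCommGroup V] [InnerProductSpace ℝ V]

theorem Submodule.eq_of_forall_inner_eq {W : Submodule ℝ V} {a b : V} (ha : a ∈ W) (hb : b ∈ W)
    (hab : ∀ y ∈ W, ⟪a, y⟫ = ⟪b, y⟫) : a = b := by
  have hsub : a - b ∈ W ⊓ Wᗮ := by
    refine ⟨W.sub_mem ha hb, (W.mem_orthogonal' _).2 fun y hy => ?_⟩
    rw [inner_sub_left, hab y hy, sub_self]
  rw [W.inf_orthogonal_eq_bot, Submodule.mem_bot, sub_eq_zero] at hsub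
  exact hsub

theorem inner_apply_right_eq_neg_inner_apply_left {J : V →ₗ[ℝ] V}
    (hJinner : ∀ x y : V, ⟪J x, J y⟫ = ⟪x, y⟫) (hJsq : ∀ x : V, J (J x) = -x) (a b : V) :
    ⟪a, J b⟫ = -⟪J a, b⟫ := by
  rw [← hJinner a (J b), hJsq, inner_neg_right]

theorem inner_normalPart_right_eq_neg_inner_normalPart_left {J t n : V →ₗ[ℝ] V}
    {W : Submodule ℝ V} (hJinner : ∀ x y : V, ⟪J x, J y⟫ = ⟪x, y⟫)
    (hJsq : ∀ x : V, J (J x) = -x) (ht : ∀ v ∈ Wᗮ, t v ∈ W)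
    (htn : ∀ v ∈ Wᗮ, J v = t v + n v) {a v : V} (ha : a ∈ Wᗮ) (hv : v ∈ Wᗮ) :
    ⟪a, n v⟫ = -⟪n a, v⟫ := by
  have hJv : ⟪a, J v⟫ = ⟪a, n v⟫ := by
    rw [htn v hv, inner_add_right, W.inner_left_of_mem_orthogonal (ht v hv) ha, zero_add]
  have hJa : ⟪J a, v⟫ = ⟪n a, v⟫ := by
    rw [htn a ha, inner_add_left, W.inner_right_of_mem_orthogonal (ht a ha) hv, zero_add]
  rw [← hJv, ← hJa, inner_apply_right_eq_neg_inner_apply_left hJinner hJsq]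

end

theorem shape_n_anticommutes_of_nablaN_zero_general
    {V : Type*} [NormedAddCommGroup V] [InnerProductSpace ℝ V]
    (J : V →ₗ[ℝ] V)
    (hJinner : ∀ x y : V, ⟪J x, J y⟫ = ⟪x, y⟫)
    (hJsq : ∀ x : V, J (J x) = -x)
    (W : Submodule ℝ V)
    (T : V →ₗ[ℝ] V)
    (hT : ∀ x ∈ W, T x ∈ W)
    (t n : V →ₗ[ℝ] V)
    (ht : ∀ v ∈ Wᗮ, t v ∈ W)
    (hn : ∀ v ∈ Wᗮ, n v ∈ Wᗮ)
    (htn : ∀ v ∈ Wᗮ, J v = t v + n v)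
    (h : V →ₗ[ℝ] V →ₗ[ℝ] V)
    (hhmem : ∀ x ∈ W, ∀ y ∈ W, h x y ∈ Wᗮ)
    (hhsymm : ∀ x ∈ W, ∀ y ∈ W, h x y = h y x)
    (A : V → V →ₗ[ℝ] V)
    (hAmem : ∀ v ∈ Wᗮ, ∀ x ∈ W, A v x ∈ W)
    (hA : ∀ v ∈ Wᗮ, ∀ x ∈ W, ∀ y ∈ W, ⟪A v x, y⟫ = ⟪h x y, v⟫)
    (hnab : ∀ x ∈ W, ∀ y ∈ W, h x (T y) = n (h x y)) :
    ∀ v ∈ Wᗮ, ∀ x ∈ W, A (n v) x = -(A v (T x)) := by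
  intro v hv x hx
  have hnh : ∀ y ∈ W, n (h x y) = h (T x) y := fun y hy => by
    rw [hhsymm x hx y hy, ← hnab y hy x hx, hhsymm y hy (T x) (hT x hx)]
  refine W.eq_of_forall_inner_eq (hAmem _ (hn v hv) x hx)
    (W.neg_mem (hAmem v hv _ (hT x hx))) fun y hy => ?_
  calc ⟪A (n v) x, y⟫ = ⟪h x y, n v⟫ := hA _ (hn v hv) x hx y hy
    _ = -⟪n (h x y), v⟫ :=
      inner_normalPart_right_eq_neg_inner_normalPart_left hJinner hJsq ht htn
        (hhmem x hx y hy) hv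
    _ = -⟪A v (T x), y⟫ := by rw [hnh y hy, hA v hv _ (hT x hx) y hy]
    _ = ⟪-A v (T x), y⟫ := (inner_neg_left _ _).symm

/-- Proposition 3.4 (ii), implication ∇N = 0 ⇒ (3), fiberwise:
if `h(x, Ty) = n h(x, y)` for all `x, y ∈ W`, then
`A_{nv} x = -A_v(Tx)` for all `x ∈ W`, `v ∈ W⊥`. -/
theorem shape_n_anticommutes_of_nablaN_zero
    {V : Type*} [NormedAddCommGroup V] [InnerProductSpace ℝ V] [FiniteDimensional ℝ V]
    (J : V →ₗ[ℝ] V)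
    (hJinner : ∀ x y : V, ⟪J x, J y⟫ = ⟪x, y⟫)
    (hJsq : ∀ x : V, J (J x) = -x)
    (W : Submodule ℝ V)
    (T N : V →ₗ[ℝ] V)
    (hT : ∀ x ∈ W, T x ∈ W)
    (hN : ∀ x ∈ W, N x ∈ Wᗮ)
    (hTN : ∀ x ∈ W, J x = T x + N x)
    (t n : V →ₗ[ℝ] V)
    (ht : ∀ v ∈ Wᗮ, t v ∈ W)
    (hn : ∀ v ∈ Wᗮ, n v ∈ Wᗮ)
    (htn : ∀ v ∈ Wᗮ, J v = t v + n v)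
    (h : V →ₗ[ℝ] V →ₗ[ℝ] V)
    (hhmem : ∀ x ∈ W, ∀ y ∈ W, h x y ∈ Wᗮ)
    (hhsymm : ∀ x ∈ W, ∀ y ∈ W, h x y = h y x)
    (A : V → V →ₗ[ℝ] V)
    (hAmem : ∀ v ∈ Wᗮ, ∀ x ∈ W, A v x ∈ W)
    (hA : ∀ v ∈ Wᗮ, ∀ x ∈ W, ∀ y ∈ W, ⟪A v x, y⟫ = ⟪h x y, v⟫)
    (hnab : ∀ x ∈ W, ∀ y ∈ W, h x (T y) = n (h x y)) :
    ∀ v ∈ Wᗮ, ∀ x ∈ W, A (n v) x = -(A v (T x)) :=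
  shape_n_anticommutes_of_nablaN_zero_general J hJinner hJsq W T hT t n ht hn htn h hhmem hhsymm A
    hAmem hA hnab
end

section
/- Suppose h(x, Ty) = n h(x, y) for all x, y ∈ W (the fiberwise form of the condition ∇N = 0 for a pointwise k-slant submanifold of a Kähler manifold). Then for every i ∈ {0,…,k}, every x ∈ W and every y ∈ Dᵢ, n(n h(x, y)) = -cos²θᵢ · h(x, y); in particular, for x, y ∈ Dᵢ, every nonzero h(x, y) is an eigenvector of n² with eigenvalue -cos²θᵢ (Theorem 3.6 (ii), fiberwise form). -/
/-!
On each `Dᵢ` the tangential part `T` of `J` is skew-adjoint and scales norms by `cos θᵢ`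
(on the invariant `D₀`, `T = J` and `θ₀ = 0`), so polarization gives
`⟪T y, T z⟫ = cos²θᵢ ⟪y, z⟫` and hence `T² = -cos²θᵢ` on `Dᵢ`. Applying the hypothesis
`h(x, T y) = n h(x, y)` twice turns `n² h(x, y)` into `h(x, T² y) = -cos²θᵢ h(x, y)`.
-/

open scoped RealInnerProductSpace

section

variable {V : Type*} [NormedAddCommGroup V] [InnerProductSpace ℝ V]

theorem inner_apply_eq_neg_inner_apply {J : V →ₗ[ℝ] V}
    (hJinner : ∀ x y : V, ⟪J x, J y⟫ = ⟪x, y⟫) (hJsq : ∀ x : V, J (J x) = -x) (x z : V) :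
    ⟪J x, z⟫ = -⟪x, J z⟫ := by
  have h := hJinner x (J z)
  rw [hJsq z, inner_neg_right] at h
  linarith

theorem inner_tangential_eq_neg_inner_tangential {J T N : V →ₗ[ℝ] V} {W : Submodule ℝ V}
    (hJskew : ∀ x z : V, ⟪J x, z⟫ = -⟪x, J z⟫) (hN : ∀ x ∈ W, N x ∈ Wᗮ)
    (hTN : ∀ x ∈ W, J x = T x + N x) {x z : V} (hx : x ∈ W) (hz : z ∈ W) :
    ⟪T x, z⟫ = -⟪x, T z⟫ := by
  have hJx : ⟪J x, z⟫ = ⟪T x, z⟫ := by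
    rw [hTN x hx, inner_add_left, Submodule.inner_left_of_mem_orthogonal hz (hN x hx), add_zero]
  have hJz : ⟪x, J z⟫ = ⟪x, T z⟫ := by
    rw [hTN z hz, inner_add_right, Submodule.inner_right_of_mem_orthogonal hx (hN z hz), add_zero]
  rw [← hJx, ← hJz, hJskew]

theorem tangential_eq_of_mem_of_invariant {J T N : V →ₗ[ℝ] V} {W D : Submodule ℝ V}
    (hT : ∀ x ∈ W, T x ∈ W) (hN : ∀ x ∈ W, N x ∈ Wᗮ) (hTN : ∀ x ∈ W, J x = T x + N x)
    (hDW : D ≤ W) (hinv : ∀ x ∈ D, J x ∈ D) {y : V} (hy : y ∈ D) :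
    T y = J y := by
  have hyW := hDW hy
  have hNyW : N y ∈ W := by
    rw [show N y = J y - T y by rw [hTN y hyW]; abel]
    exact W.sub_mem (hDW (hinv y hy)) (hT y hyW)
  have hNy : N y = 0 :=
    inner_self_eq_zero.mp (Submodule.inner_right_of_mem_orthogonal hNyW (hN y hyW))
  rw [hTN y hyW, hNy, add_zero]

theorem inner_apply_apply_eq_sq_mul_inner {T : V →ₗ[ℝ] V} {D : Submodule ℝ V} {c : ℝ}
    (hnorm : ∀ x ∈ D, ‖T x‖ = c * ‖x‖) {x y : V} (hx : x ∈ D) (hy : y ∈ D) :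
    ⟪T x, T y⟫ = c ^ 2 * ⟪x, y⟫ := by
  have hsq : ∀ z ∈ D, ‖T z‖ ^ 2 = c ^ 2 * ‖z‖ ^ 2 := fun z hz => by rw [hnorm z hz]; ring
  have hxy := hsq (x + y) (D.add_mem hx hy)
  rw [map_add, norm_add_sq_real, norm_add_sq_real, hsq x hx, hsq y hy] at hxy
  linarith

theorem apply_apply_eq_neg_sq_smul {T : V →ₗ[ℝ] V} {D : Submodule ℝ V} {c : ℝ}
    (hTD : ∀ x ∈ D, T x ∈ D) (hskew : ∀ x ∈ D, ∀ z ∈ D, ⟪T x, z⟫ = -⟪x, T z⟫)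
    (hnorm : ∀ x ∈ D, ‖T x‖ = c * ‖x‖) {y : V} (hy : y ∈ D) :
    T (T y) = -(c ^ 2 • y) := by
  set u := T (T y) + c ^ 2 • y
  have huD : u ∈ D := D.add_mem (hTD _ (hTD y hy)) (D.smul_mem _ hy)
  have hu : ∀ z ∈ D, ⟪u, z⟫ = 0 := fun z hz => by
    rw [inner_add_left, real_inner_smul_left, hskew _ (hTD y hy) z hz,
      inner_apply_apply_eq_sq_mul_inner hnorm hy hz]
    ring
  rw [eq_neg_iff_add_eq_zero]
  exact inner_self_eq_zero.mp (hu u huD)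

end

theorem n_sq_eigen_of_nablaN_zero_general
    {V : Type*} [NormedAddCommGroup V] [InnerProductSpace ℝ V]
    (J : V →ₗ[ℝ] V)
    (hJinner : ∀ x y : V, ⟪J x, J y⟫ = ⟪x, y⟫)
    (hJsq : ∀ x : V, J (J x) = -x)
    (W : Submodule ℝ V)
    (T N : V →ₗ[ℝ] V)
    (hT : ∀ x ∈ W, T x ∈ W)
    (hN : ∀ x ∈ W, N x ∈ Wᗮ)
    (hTN : ∀ x ∈ W, J x = T x + N x)
    (k : ℕ)
    (D : Fin (k+1) → Submodule ℝ V)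
    (hDW : ∀ i, D i ≤ W)
    (hinv : ∀ x ∈ D 0, J x ∈ D 0)
    (hTD : ∀ i : Fin (k+1), i ≠ 0 → ∀ x ∈ D i, T x ∈ D i)
    (θ : Fin (k+1) → ℝ)
    (hθ0 : θ 0 = 0)
    (hslant : ∀ i : Fin (k+1), i ≠ 0 → ∀ x ∈ D i, ‖T x‖ = Real.cos (θ i) * ‖x‖)
    (n : V →ₗ[ℝ] V)
    (h : V →ₗ[ℝ] V →ₗ[ℝ] V)
    (hnab : ∀ x ∈ W, ∀ y ∈ W, h x (T y) = n (h x y)) :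
    ∀ i : Fin (k+1), ∀ x ∈ W, ∀ y ∈ D i,
      n (n (h x y)) = -((Real.cos (θ i)) ^ 2 • h x y) := by
  have hTD0 : ∀ y ∈ D 0, T y = J y := fun y hy =>
    tangential_eq_of_mem_of_invariant hT hN hTN (hDW 0) hinv hy
  have hDslant : ∀ i, (∀ x ∈ D i, T x ∈ D i) ∧ ∀ x ∈ D i, ‖T x‖ = Real.cos (θ i) * ‖x‖ := by
    intro i
    by_cases hi : i = 0
    · subst hi
      refine ⟨fun x hx => hTD0 x hx ▸ hinv x hx, fun x hx => ?_⟩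
      rw [hTD0 x hx, hθ0, Real.cos_zero, one_mul]
      exact (J.isometryOfInner hJinner).norm_map x
    · exact ⟨hTD i hi, hslant i hi⟩
  intro i x hx y hy
  obtain ⟨hTDi, hnormi⟩ := hDslant i
  have hskew : ∀ u ∈ D i, ∀ z ∈ D i, ⟪T u, z⟫ = -⟪u, T z⟫ := fun u hu z hz =>
    inner_tangential_eq_neg_inner_tangential (inner_apply_eq_neg_inner_apply hJinner hJsq)
      hN hTN (hDW i hu) (hDW i hz)
  calc n (n (h x y)) = h x (T (T y)) := by
        rw [← hnab x hx y (hDW i hy), ← hnab x hx (T y) (hDW i (hTDi y hy))]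
    _ = -((Real.cos (θ i)) ^ 2 • h x y) := by
        rw [apply_apply_eq_neg_sq_smul hTDi hskew hnormi hy, map_neg, map_smul]

/-- Theorem 3.6 (ii), fiberwise: if `h(x, Ty) = n h(x, y)` on `W` (the fiberwise form of
∇N = 0), then `n²(h(x, y)) = -cos²θᵢ · h(x, y)` for every `i`, `x ∈ W`, `y ∈ Dᵢ`;
in particular any nonzero `h(x, y)` with `x, y ∈ Dᵢ` is an eigenvector of `n²` with
eigenvalue `-cos²θᵢ`. -/
theorem n_sq_eigen_of_nablaN_zero
    {V : Type*} [NormedAddCommGroup V] [InnerProductSpace ℝ V] [FiniteDimensional ℝ V]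
    (J : V →ₗ[ℝ] V)
    (hJinner : ∀ x y : V, ⟪J x, J y⟫ = ⟪x, y⟫)
    (hJsq : ∀ x : V, J (J x) = -x)
    (W : Submodule ℝ V)
    (T N : V →ₗ[ℝ] V)
    (hT : ∀ x ∈ W, T x ∈ W)
    (hN : ∀ x ∈ W, N x ∈ Wᗮ)
    (hTN : ∀ x ∈ W, J x = T x + N x)
    (k : ℕ)
    (D : Fin (k+1) → Submodule ℝ V)
    (hDW : ∀ i, D i ≤ W)
    (hDorth : ∀ i j, i ≠ j → ∀ x ∈ D i, ∀ y ∈ D j, ⟪x, y⟫ = 0)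
    (hinv : ∀ x ∈ D 0, J x ∈ D 0)
    (hTD : ∀ i : Fin (k+1), i ≠ 0 → ∀ x ∈ D i, T x ∈ D i)
    (θ : Fin (k+1) → ℝ)
    (hθ0 : θ 0 = 0)
    (hθ : ∀ i : Fin (k+1), i ≠ 0 → θ i ∈ Set.Ioc 0 (Real.pi / 2))
    (hslant : ∀ i : Fin (k+1), i ≠ 0 → ∀ x ∈ D i, ‖T x‖ = Real.cos (θ i) * ‖x‖)
    (P : Fin (k+1) → V →ₗ[ℝ] V)
    (hPmem : ∀ i x, P i x ∈ D i)
    (hPorth : ∀ i x, ∀ y ∈ D i, ⟪x - P i x, y⟫ = 0)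
    (hPsum : ∀ x ∈ W, x = ∑ i, P i x)
    (t n : V →ₗ[ℝ] V)
    (ht : ∀ v ∈ Wᗮ, t v ∈ W)
    (hn : ∀ v ∈ Wᗮ, n v ∈ Wᗮ)
    (htn : ∀ v ∈ Wᗮ, J v = t v + n v)
    (h : V →ₗ[ℝ] V →ₗ[ℝ] V)
    (hhmem : ∀ x ∈ W, ∀ y ∈ W, h x y ∈ Wᗮ)
    (hhsymm : ∀ x ∈ W, ∀ y ∈ W, h x y = h y x)
    (hnab : ∀ x ∈ W, ∀ y ∈ W, h x (T y) = n (h x y)) :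
    ∀ i : Fin (k+1), ∀ x ∈ W, ∀ y ∈ D i,
      n (n (h x y)) = -((Real.cos (θ i)) ^ 2 • h x y) :=
  n_sq_eigen_of_nablaN_zero_general J hJinner hJsq W T N hT hN hTN k D hDW hinv hTD θ hθ0 hslant n h
    hnab
end
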